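/- If Deductive ASPIC⊖ satisfies non-interference under preferred semantics and is non-trivial under preferred semantics, then it satisfies crash-resistance under preferred semantics: there is no contaminating argumentation system. -/

import Mathlib

/-- Abstract setting for non-interference / crash-resistance: a type `AS` of argumentation
systems with an atom-set function, a union relation, and a preferred-conclusions operator
`C` assigning to each argumentation system a set of conclusion sets (sets of formulas).
`restr` restricts a set of conclusion sets elementwise to the formulas over a given atom set. -/
structure CRSetting where
  F : Type
  Atom : Type
  atomsF : F → Set Atom
  AS : Type
  atoms : AS → Set Atom
  /-- `IsUnion a₁ a₂ ap`: ap is a union of a₁ and a₂. -/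
  IsUnion : AS → AS → AS → Prop
  C : AS → Set (Set F)

namespace CRSetting

variable (S : CRSetting)

/-- The set of all atoms of the language. -/
def allAtoms : Set S.Atom := Set.univ

def SynDisj (a₁ a₂ : S.AS) : Prop := S.atoms a₁ ∩ S.atoms a₂ = ∅

def restr (Cs : Set (Set S.F)) (Δ : Set S.Atom) : Set (Set S.F) :=
  {Γ' | ∃ Γ ∈ Cs, Γ' = {φ ∈ Γ | S.atomsF φ ⊆ Δ}}

/-- Non-interference: combining syntactically disjoint systems does not change the
conclusions over the atoms of either of them. -/
def NonInterference : Prop :=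
  ∀ a₁ a₂ ap : S.AS, S.SynDisj a₁ a₂ → S.IsUnion a₁ a₂ ap →
    S.restr (S.C a₁) (S.atoms a₁) = S.restr (S.C ap) (S.atoms a₁) ∧
    S.restr (S.C a₂) (S.atoms a₂) = S.restr (S.C ap) (S.atoms a₂)

/-- Non-triviality: for every nonempty atom set Γ there are two argumentation systems over
exactly the atoms Γ whose restricted conclusion sets differ. -/
def NonTrivial : Prop :=
  ∀ Γ : Set S.Atom, Γ.Nonempty →
    ∃ a₁ a₂ : S.AS, S.atoms a₁ = Γ ∧ S.atoms a₂ = Γ ∧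
      S.restr (S.C a₁) Γ ≠ S.restr (S.C a₂) Γ

/-- A contaminating argumentation system. -/
def Contaminating (a : S.AS) : Prop :=
  S.atoms a ⊂ S.allAtoms ∧
  ∀ a' ap : S.AS, S.SynDisj a a' → S.IsUnion a a' ap → S.C a = S.C ap

/-- Crash-resistance: no contaminating argumentation system exists. -/
def CrashResistant : Prop := ¬ ∃ a : S.AS, S.Contaminating a

end CRSetting

/-!
Let `a` be contaminating and let `Γ` be the (nonempty) set of atoms outside `a`. Any system over
exactly `Γ` is syntactically disjoint from `a`, so by non-interference its conclusions restricted
to `Γ` are those of its union with `a`, which by contamination are those of `a` alone. Hence all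
systems over `Γ` have the same restricted conclusions, contradicting non-triviality.
-/

namespace CRSetting

variable {S : CRSetting} {a a' ap : S.AS}

theorem synDisj_of_atoms_eq_compl (h : S.atoms a' = (S.atoms a)ᶜ) : S.SynDisj a a' := by
  rw [SynDisj, h, Set.inter_compl_self]

theorem Contaminating.compl_atoms_nonempty (hc : S.Contaminating a) : (S.atoms a)ᶜ.Nonempty := by
  obtain ⟨x, -, hx⟩ := Set.exists_of_ssubset hc.1
  exact ⟨x, hx⟩

theorem Contaminating.restr_C_eq (hNI : S.NonInterference) (hc : S.Contaminating a)
    (hd : S.SynDisj a a') (hu : S.IsUnion a a' ap) :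
    S.restr (S.C a') (S.atoms a') = S.restr (S.C a) (S.atoms a') := by
  rw [(hNI a a' ap hd hu).2, hc.2 a' ap hd hu]

theorem Contaminating.restr_C_eq_of_atoms_eq_compl
    (hUex : ∀ a₁ a₂ : S.AS, S.SynDisj a₁ a₂ → ∃ ap, S.IsUnion a₁ a₂ ap)
    (hNI : S.NonInterference) (hc : S.Contaminating a) (h : S.atoms a' = (S.atoms a)ᶜ) :
    S.restr (S.C a') (S.atoms a)ᶜ = S.restr (S.C a) (S.atoms a)ᶜ := by
  have hd := synDisj_of_atoms_eq_compl h
  obtain ⟨ap, hu⟩ := hUex a a' hd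
  rw [← h]
  exact hc.restr_C_eq hNI hd hu

end CRSetting

/-- If Deductive ASPIC⊖ satisfies non-interference under preferred semantics and
is non-trivial under preferred semantics (and unions of syntactically disjoint systems exist),
then it satisfies crash-resistance under preferred semantics: there is no contaminating
argumentation system. -/
theorem noninterference_implies_crash_resistance (S : CRSetting)
    (hUex : ∀ a₁ a₂ : S.AS, S.SynDisj a₁ a₂ → ∃ ap, S.IsUnion a₁ a₂ ap)
    (hNI : S.NonInterference) (hNT : S.NonTrivial) :
    S.CrashResistant := by
  rintro ⟨a, hc⟩
  obtain ⟨a₁, a₂, h₁, h₂, hne⟩ := hNT _ hc.compl_atoms_nonempty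
  exact hne <| (hc.restr_C_eq_of_atoms_eq_compl hUex hNI h₁).trans
    (hc.restr_C_eq_of_atoms_eq_compl hUex hNI h₂).symm
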